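/- arXiv:0902.0685 — 3 statements merged into one kernel-verified Lean document; each statement's English description precedes it below -/
import Mathlib

section
/- Poisson's theorem: if H, f, g : ℝ^{2n} → ℝ are C² functions such that {H, f} = 0 and {H, g} = 0 identically (f and g are first integrals of the Hamiltonian system with Hamiltonian H), then {H, {f, g}} = 0 identically, i.e. the Poisson bracket {f, g} is again a first integral. -/
/-!
Writing `X_φ` for the Hamiltonian vector field of `φ`, so that `{φ, ψ} = Dψ (X_φ)`,
differentiating the bracket gives `{a, {b, c}} = D²c (X_a, X_b) - D²b (X_a, X_c)`.
Summing cyclically, the six Hessian terms cancel in pairs by symmetry of second derivatives: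
this is the Jacobi identity. Since `{H, f}` and `{g, H} = -{H, g}` vanish identically,
the Jacobi identity for `f`, `g`, `H` leaves `{H, {f, g}} = 0`.
-/

/-- The canonical Poisson bracket of two functions on the phase space
`(Fin n → ℝ) × (Fin n → ℝ)`, whose points are written `z = (q, p)`:
`{f, g}(z) = ∑ k, (∂f/∂p_k · ∂g/∂q_k − ∂f/∂q_k · ∂g/∂p_k)(z)`. -/
noncomputable def poissonBracket (n : ℕ)
    (f g : (Fin n → ℝ) × (Fin n → ℝ) → ℝ)
    (z : (Fin n → ℝ) × (Fin n → ℝ)) : ℝ :=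
  ∑ k : Fin n,
    (fderiv ℝ f z ((0 : Fin n → ℝ), Pi.single k 1) *
        fderiv ℝ g z (Pi.single k 1, (0 : Fin n → ℝ)) -
      fderiv ℝ f z (Pi.single k 1, (0 : Fin n → ℝ)) *
        fderiv ℝ g z ((0 : Fin n → ℝ), Pi.single k 1))

open Finset

section

variable {n : ℕ}

local notation "E" n => (Fin n → ℝ) × (Fin n → ℝ)

/-- At `a = DH(z)` this is the Hamiltonian vector field `(∂H/∂p, -∂H/∂q)` of `H` at `z`. -/
noncomputable def hamiltonianVector (n : ℕ) : ((E n) →L[ℝ] ℝ) →L[ℝ] E n :=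
  ∑ k : Fin n,
    ((ContinuousLinearMap.apply ℝ ℝ ((0 : Fin n → ℝ), Pi.single k 1)).smulRight
        (Pi.single k 1, (0 : Fin n → ℝ)) -
      (ContinuousLinearMap.apply ℝ ℝ (Pi.single k 1, (0 : Fin n → ℝ))).smulRight
        ((0 : Fin n → ℝ), Pi.single k 1))

theorem apply_hamiltonianVector (a b : (E n) →L[ℝ] ℝ) :
    b (hamiltonianVector n a) =
      ∑ k : Fin n,
        (a ((0 : Fin n → ℝ), Pi.single k 1) * b (Pi.single k 1, (0 : Fin n → ℝ)) -
          a (Pi.single k 1, (0 : Fin n → ℝ)) * b ((0 : Fin n → ℝ), Pi.single k 1)) := by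
  rw [hamiltonianVector, _root_.sum_apply, map_sum]
  refine sum_congr rfl fun k _ => ?_
  simp only [sub_apply, ContinuousLinearMap.smulRight_apply, ContinuousLinearMap.apply_apply,
    map_sub, map_smul, smul_eq_mul]

theorem apply_hamiltonianVector_swap (a b : (E n) →L[ℝ] ℝ) :
    b (hamiltonianVector n a) = -a (hamiltonianVector n b) := by
  rw [apply_hamiltonianVector, apply_hamiltonianVector, ← sum_neg_distrib]
  exact sum_congr rfl fun _ _ => by ring

theorem poissonBracket_eq (f g : (E n) → ℝ) (z : E n) :
    poissonBracket n f g z = fderiv ℝ g z (hamiltonianVector n (fderiv ℝ f z)) :=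
  (apply_hamiltonianVector _ _).symm

theorem poissonBracket_swap (f g : (E n) → ℝ) (z : E n) :
    poissonBracket n g f z = -poissonBracket n f g z := by
  rw [poissonBracket_eq, poissonBracket_eq, apply_hamiltonianVector_swap]

theorem poissonBracket_zero_right (f : (E n) → ℝ) (z : E n) :
    poissonBracket n f 0 z = 0 := by
  rw [poissonBracket_eq, fderiv_zero, Pi.zero_apply, zero_apply]

theorem fderiv_poissonBracket_apply {f g : (E n) → ℝ} (hf : ContDiff ℝ 2 f)
    (hg : ContDiff ℝ 2 g) (z v : E n) :
    fderiv ℝ (poissonBracket n f g) z v =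
      fderiv ℝ (fderiv ℝ g) z v (hamiltonianVector n (fderiv ℝ f z)) -
        fderiv ℝ (fderiv ℝ f) z v (hamiltonianVector n (fderiv ℝ g z)) := by
  have hasFDerivAt_fderiv {φ : (E n) → ℝ} (hφ : ContDiff ℝ 2 φ) :
      HasFDerivAt (fderiv ℝ φ) (fderiv ℝ (fderiv ℝ φ) z) z :=
    ((hφ.fderiv_right (m := 1) le_rfl).differentiable one_ne_zero z).hasFDerivAt
  have hderiv : HasFDerivAt (poissonBracket n f g)
      (fderiv ℝ g z ∘L hamiltonianVector n ∘L fderiv ℝ (fderiv ℝ f) z +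
        (fderiv ℝ (fderiv ℝ g) z).flip (hamiltonianVector n (fderiv ℝ f z))) z := by
    rw [funext (poissonBracket_eq f g)]
    exact (hasFDerivAt_fderiv hg).clm_apply
      ((hamiltonianVector n).hasFDerivAt.comp z (hasFDerivAt_fderiv hf))
  rw [hderiv.fderiv]
  simp only [add_apply, ContinuousLinearMap.comp_apply, ContinuousLinearMap.flip_apply,
    apply_hamiltonianVector_swap (fderiv ℝ (fderiv ℝ f) z v)]
  ring

theorem poissonBracket_poissonBracket (a : (E n) → ℝ) {b c : (E n) → ℝ}
    (hb : ContDiff ℝ 2 b) (hc : ContDiff ℝ 2 c) (z : E n) :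
    poissonBracket n a (poissonBracket n b c) z =
      fderiv ℝ (fderiv ℝ c) z (hamiltonianVector n (fderiv ℝ a z))
          (hamiltonianVector n (fderiv ℝ b z)) -
        fderiv ℝ (fderiv ℝ b) z (hamiltonianVector n (fderiv ℝ a z))
          (hamiltonianVector n (fderiv ℝ c z)) := by
  rw [poissonBracket_eq, fderiv_poissonBracket_apply hb hc]

theorem poissonBracket_jacobi {f g h : (E n) → ℝ} (hf : ContDiff ℝ 2 f) (hg : ContDiff ℝ 2 g)
    (hh : ContDiff ℝ 2 h) (z : E n) :
    poissonBracket n f (poissonBracket n g h) z + poissonBracket n g (poissonBracket n h f) z +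
      poissonBracket n h (poissonBracket n f g) z = 0 := by
  have symm {φ : (E n) → ℝ} (hφ : ContDiff ℝ 2 φ) :=
    hφ.contDiffAt.isSymmSndFDerivAt (x := z) (by simp)
  rw [poissonBracket_poissonBracket f hg hh, poissonBracket_poissonBracket g hh hf,
    poissonBracket_poissonBracket h hf hg, symm hf, symm hg, symm hh]
  ring

end

/-- **Poisson's theorem.** If `H`, `f`, `g` are `C²` functions on phase space such
that `{H, f} = 0` and `{H, g} = 0` identically (`f` and `g` are first integrals of
the Hamiltonian system with Hamiltonian `H`), then `{H, {f, g}} = 0` identically: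
the Poisson bracket `{f, g}` is again a first integral. -/
theorem poisson_theorem (n : ℕ)
    (H f g : (Fin n → ℝ) × (Fin n → ℝ) → ℝ)
    (hH : ContDiff ℝ 2 H) (hf : ContDiff ℝ 2 f) (hg : ContDiff ℝ 2 g)
    (hHf : ∀ z, poissonBracket n H f z = 0)
    (hHg : ∀ z, poissonBracket n H g z = 0) :
    ∀ z, poissonBracket n H (poissonBracket n f g) z = 0 := by
  intro z
  have hHf' : poissonBracket n H f = 0 := funext hHf
  have hgH : poissonBracket n g H = 0 :=
    funext fun y => by rw [poissonBracket_swap, hHg, neg_zero, Pi.zero_apply]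
  have := poissonBracket_jacobi hf hg hH z
  rwa [hgH, hHf', poissonBracket_zero_right, poissonBracket_zero_right, zero_add,
    zero_add] at this
end

section
/- Lagrange's invariance theorem (the canonical symplectic form is invariant under Hamiltonian flows): let H : ℝ × ℝ^{2n} → ℝ be C² and let Φ : ℝ × ℝ^{2n} → ℝ^{2n} be a C² map satisfying ∂Φ/∂t(t, a) = J ∇_z H(t, Φ(t, a)) for all (t, a), and Φ(t₀, a) = a for all a at some initial time t₀. Then for every (t, a) the spatial Jacobian matrix D_aΦ(t, a) is symplectic, i.e. (D_aΦ)ᵀ J (D_aΦ) = J. Equivalently, the Lagrange parentheses of the flow do not depend on time. -/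
/-!
Write `M(t) = D_aΦ(t, a)`. Because `Φ` is `C²`, time and space derivatives commute, so
differentiating the flow equation in `a` gives the variational equation `M' = J S M`, where
`S` is the (symmetric) Hessian of `H(t, ·)` at `Φ(t, a)`. Since `Jᵀ = -J` and `J² = -1`,
`(J S)ᵀ J + J (J S) = S - S = 0`, hence `(Mᵀ J M)' = Mᵀ ((J S)ᵀ J + J (J S)) M = 0`, and
`Mᵀ J M` keeps its value `J` at `t₀`, where `M(t₀) = 1`.
-/

open Matrix

/-- The standard `2n × 2n` real symplectic matrix `J = [[0, Iₙ], [−Iₙ, 0]]`,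
with the indexing set `Fin n ⊕ Fin n` for `{1, …, 2n}`. -/
def symplecticJ (n : ℕ) : Matrix (Fin n ⊕ Fin n) (Fin n ⊕ Fin n) ℝ :=
  Matrix.fromBlocks 0 1 (-1) 0

/-- The spatial Jacobian matrix `D_aΦ(t, a)` of a time-dependent map
`Φ : ℝ → ℝ²ⁿ → ℝ²ⁿ`: its `(i, j)` entry is `∂Φ_i/∂a_j (t, a)`. -/
noncomputable def spatialJacobian (n : ℕ)
    (Φ : ℝ → ((Fin n ⊕ Fin n) → ℝ) → (Fin n ⊕ Fin n) → ℝ)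
    (t : ℝ) (a : (Fin n ⊕ Fin n) → ℝ) : Matrix (Fin n ⊕ Fin n) (Fin n ⊕ Fin n) ℝ :=
  Matrix.of fun i j => fderiv ℝ (fun b => Φ t b i) a (Pi.single j 1)

section Slices

variable {𝕜 E F G : Type*} [NontriviallyNormedField 𝕜] [NormedAddCommGroup E] [NormedSpace 𝕜 E]
  [NormedAddCommGroup F] [NormedSpace 𝕜 F] [NormedAddCommGroup G] [NormedSpace 𝕜 G]

theorem DifferentiableAt.fderiv_prodMk_right_apply {f : E × F → G} {x : E} {y : F}
    (hf : DifferentiableAt 𝕜 f (x, y)) (v : F) :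
    fderiv 𝕜 (fun b => f (x, b)) y v = fderiv 𝕜 f (x, y) (0, v) := by
  rw [show (fun b => f (x, b)) = f ∘ Prod.mk x from rfl,
    (hf.hasFDerivAt.comp y (hasFDerivAt_prodMk_right x y)).fderiv]
  rfl

theorem DifferentiableAt.hasDerivAt_prodMk_left {f : 𝕜 × F → G} {t : 𝕜} {y : F}
    (hf : DifferentiableAt 𝕜 f (t, y)) :
    HasDerivAt (fun s => f (s, y)) (fderiv 𝕜 f (t, y) (1, 0)) t :=
  hf.hasFDerivAt.comp_hasDerivAt t ((hasDerivAt_id t).prodMk (hasDerivAt_const t y))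

end Slices

section Flow

variable {E F : Type*} [NormedAddCommGroup E] [NormedSpace ℝ E]
  [NormedAddCommGroup F] [NormedSpace ℝ F]

theorem ContDiff.hasDerivAt_fderiv_prodMk_right {f : ℝ × E → F} (hf : ContDiff ℝ 2 f)
    (t : ℝ) (a v : E) :
    HasDerivAt (fun s => fderiv ℝ (fun b => f (s, b)) a v)
      (fderiv ℝ (fun b => deriv (fun s => f (s, b)) t) a v) t := by
  have hf1 : Differentiable ℝ f := hf.differentiable two_ne_zero
  have hf2 : Differentiable ℝ (fderiv ℝ f) :=
    (hf.fderiv_right (m := 1) le_rfl).differentiable one_ne_zero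
  have hspace : (fun s => fderiv ℝ (fun b => f (s, b)) a v) = fun s => fderiv ℝ f (s, a) (0, v) :=
    funext fun s => (hf1 _).fderiv_prodMk_right_apply v
  have htime : (fun b => deriv (fun s => f (s, b)) t) = fun b => fderiv ℝ f (t, b) (1, 0) :=
    funext fun b => (hf1 _).hasDerivAt_prodMk_left.deriv
  have hsymm : fderiv ℝ (fderiv ℝ f) (t, a) (0, v) (1, 0)
      = fderiv ℝ (fderiv ℝ f) (t, a) (1, 0) (0, v) :=
    hf.contDiffAt.isSymmSndFDerivAt (by simp) _ _
  rw [hspace, htime, ((hf2 _).clm_apply (differentiableAt_const _)).fderiv_prodMk_right_apply,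
    fderiv_clm_apply (hf2 _) (differentiableAt_const _)]
  simpa [hsymm] using (hf2 _).hasDerivAt_prodMk_left.clm_apply (hasDerivAt_const t ((0 : ℝ), v))

theorem hasDerivAt_fderiv_of_hasDerivAt_flow {Φ : ℝ → E → E} {V : E → E} {V' : E →L[ℝ] E}
    {t : ℝ} {a : E} (hΦ : ContDiff ℝ 2 (fun p : ℝ × E => Φ p.1 p.2))
    (hflow : ∀ b, HasDerivAt (fun s => Φ s b) (V (Φ t b)) t)
    (hV : HasFDerivAt V V' (Φ t a)) (v : E) :
    HasDerivAt (fun s => fderiv ℝ (Φ s) a v) (V' (fderiv ℝ (Φ t) a v)) t := by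
  have hΦt : DifferentiableAt ℝ (Φ t) a :=
    ((hΦ.differentiable two_ne_zero).comp ((differentiable_const t).prodMk differentiable_id)) a
  have htime : (fun b => deriv (fun s => Φ s b) t) = V ∘ Φ t := funext fun b => (hflow b).deriv
  simpa only [htime, (hV.comp a hΦt.hasFDerivAt).fderiv, ContinuousLinearMap.comp_apply] using
    hΦ.hasDerivAt_fderiv_prodMk_right t a v

end Flow

section MatrixODE

variable {ι : Type*} [Fintype ι]

theorem hasDerivAt_mul_apply {A B : ℝ → Matrix ι ι ℝ} {A' B' : Matrix ι ι ℝ} {t : ℝ}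
    (hA : ∀ i j, HasDerivAt (fun s => A s i j) (A' i j) t)
    (hB : ∀ i j, HasDerivAt (fun s => B s i j) (B' i j) t) (i j : ι) :
    HasDerivAt (fun s => (A s * B s) i j) ((A' * B t + A t * B') i j) t := by
  simp only [Matrix.mul_apply, Matrix.add_apply, ← Finset.sum_add_distrib]
  exact HasDerivAt.fun_sum fun k _ => (hA i k).mul (hB k j)

theorem transpose_mul_mul_self_eq_of_hasDerivAt {J : Matrix ι ι ℝ} {A M : ℝ → Matrix ι ι ℝ}
    (hA : ∀ s, (A s)ᵀ * J + J * A s = 0)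
    (hM : ∀ s i j, HasDerivAt (fun s => M s i j) ((A s * M s) i j) s) (t t₀ : ℝ) :
    (M t)ᵀ * J * M t = (M t₀)ᵀ * J * M t₀ := by
  have hMJ : ∀ s i j, HasDerivAt (fun s => ((M s)ᵀ * J) i j) (((A s * M s)ᵀ * J) i j) s := by
    intro s
    simpa using hasDerivAt_mul_apply (A := fun s => (M s)ᵀ) (A' := (A s * M s)ᵀ) (B' := 0)
      (fun i j => hM s j i) (fun i j => hasDerivAt_const s (J i j))
  have hzero : ∀ s i j, HasDerivAt (fun s => ((M s)ᵀ * J * M s) i j) 0 s := by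
    intro s i j
    have key : (A s * M s)ᵀ * J * M s + (M s)ᵀ * J * (A s * M s) = 0 := calc
      _ = (M s)ᵀ * ((A s)ᵀ * J + J * A s) * M s := by
        simp only [Matrix.transpose_mul, Matrix.mul_add, Matrix.add_mul, Matrix.mul_assoc]
      _ = 0 := by simp [hA s]
    simpa only [key, Matrix.zero_apply] using hasDerivAt_mul_apply (hMJ s) (hM s) i j
  ext i j
  exact is_const_of_deriv_eq_zero (fun s => (hzero s i j).differentiableAt)
    (fun s => (hzero s i j).deriv) t t₀

end MatrixODE

section Coordinates

variable {ι : Type*} [Fintype ι] [DecidableEq ι]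

noncomputable def hessian (f : (ι → ℝ) → ℝ) (z : ι → ℝ) : Matrix ι ι ℝ :=
  Matrix.of fun i j => fderiv ℝ (fderiv ℝ f) z (Pi.single i 1) (Pi.single j 1)

theorem hessian_isSymm {f : (ι → ℝ) → ℝ} {z : ι → ℝ} (hf : ContDiffAt ℝ 2 f z) :
    (hessian f z).IsSymm := by
  ext i j
  exact hf.isSymmSndFDerivAt (by simp) _ _

theorem hasFDerivAt_mulVec_partials (J : Matrix ι ι ℝ) {f : (ι → ℝ) → ℝ} {z : ι → ℝ}
    (hf : DifferentiableAt ℝ (fderiv ℝ f) z) :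
    HasFDerivAt (fun w => J *ᵥ fun j => fderiv ℝ f w (Pi.single j 1))
      (Matrix.toLin' (J * (hessian f z)ᵀ)).toContinuousLinearMap z := by
  have hpartial : ∀ j, HasFDerivAt (fun w => fderiv ℝ f w (Pi.single j 1))
      ((fderiv ℝ (fderiv ℝ f) z).flip (Pi.single j 1)) z := fun j => by
    simpa using hf.hasFDerivAt.clm_apply (hasFDerivAt_const (Pi.single j 1 : ι → ℝ) z)
  refine ((Matrix.toLin' J).toContinuousLinearMap.hasFDerivAt.comp z
    (hasFDerivAt_pi.2 hpartial)).congr_fderiv ?_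
  apply ContinuousLinearMap.coe_injective
  apply LinearMap.toMatrix'.injective
  ext i l
  simp [LinearMap.toMatrix'_apply, hessian, mulVec, dotProduct]

theorem hasDerivAt_toMatrix'_fderiv_of_hasDerivAt_flow {Φ : ℝ → (ι → ℝ) → ι → ℝ}
    {V : (ι → ℝ) → ι → ℝ} {A : Matrix ι ι ℝ} {t : ℝ} {a : ι → ℝ}
    (hΦ : ContDiff ℝ 2 (fun p : ℝ × (ι → ℝ) => Φ p.1 p.2))
    (hflow : ∀ b, HasDerivAt (fun s => Φ s b) (V (Φ t b)) t)
    (hV : HasFDerivAt V (Matrix.toLin' A).toContinuousLinearMap (Φ t a)) (i j : ι) :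
    HasDerivAt (fun s => LinearMap.toMatrix' (fderiv ℝ (Φ s) a : (ι → ℝ) →ₗ[ℝ] ι → ℝ) i j)
      ((A * LinearMap.toMatrix' (fderiv ℝ (Φ t) a : (ι → ℝ) →ₗ[ℝ] ι → ℝ)) i j) t := by
  simpa [LinearMap.toMatrix'_apply, Matrix.mul_apply, Matrix.mulVec, dotProduct] using
    hasDerivAt_pi.1 (hasDerivAt_fderiv_of_hasDerivAt_flow hΦ hflow hV (Pi.single j 1)) i

end Coordinates

theorem symplecticJ_transpose (n : ℕ) : (symplecticJ n)ᵀ = -symplecticJ n := by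
  simp [symplecticJ, Matrix.fromBlocks_transpose, Matrix.fromBlocks_neg]

theorem symplecticJ_mul_self (n : ℕ) : symplecticJ n * symplecticJ n = -1 := by
  simp [symplecticJ, Matrix.fromBlocks_multiply, ← Matrix.fromBlocks_one, Matrix.fromBlocks_neg]

theorem transpose_mul_symplecticJ_add_symplecticJ_mul_eq_zero {n : ℕ}
    {S : Matrix (Fin n ⊕ Fin n) (Fin n ⊕ Fin n) ℝ} (hS : S.IsSymm) :
    (symplecticJ n * S)ᵀ * symplecticJ n + symplecticJ n * (symplecticJ n * S) = 0 := by
  have hJJ : symplecticJ n * (symplecticJ n * S) = -S := by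
    rw [← Matrix.mul_assoc, symplecticJ_mul_self, neg_one_mul]
  rw [Matrix.transpose_mul, hS.eq, symplecticJ_transpose, hJJ]
  simp [Matrix.mul_assoc, symplecticJ_mul_self]

theorem spatialJacobian_eq_toMatrix' {n : ℕ}
    {Φ : ℝ → ((Fin n ⊕ Fin n) → ℝ) → (Fin n ⊕ Fin n) → ℝ} {t : ℝ} {a : (Fin n ⊕ Fin n) → ℝ}
    (hΦ : DifferentiableAt ℝ (Φ t) a) :
    spatialJacobian n Φ t a = LinearMap.toMatrix' (fderiv ℝ (Φ t) a : _ →ₗ[ℝ] _) := by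
  ext i j
  simp [spatialJacobian, LinearMap.toMatrix'_apply, fderiv_apply hΦ]

/-- **Lagrange's invariance theorem** (the canonical symplectic form is invariant
under Hamiltonian flows).  Let `H : ℝ × ℝ²ⁿ → ℝ` be `C²` and let
`Φ : ℝ × ℝ²ⁿ → ℝ²ⁿ` be a `C²` map satisfying `∂Φ/∂t(t, a) = J ∇_z H(t, Φ(t, a))`
for all `(t, a)` (componentwise: `∂Φ_i/∂t = ∑ j, J i j ∂H/∂z_j`), with
`Φ(t₀, a) = a` for all `a` at some initial time `t₀`.  Then for every `(t, a)`
the spatial Jacobian matrix `D_aΦ(t, a)` is symplectic: `(D_aΦ)ᵀ J (D_aΦ) = J`.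
Equivalently, the Lagrange parentheses of the flow do not depend on time. -/
theorem lagrange_invariance_of_symplectic_form (n : ℕ)
    (H : ℝ × ((Fin n ⊕ Fin n) → ℝ) → ℝ)
    (Φ : ℝ → ((Fin n ⊕ Fin n) → ℝ) → (Fin n ⊕ Fin n) → ℝ)
    (hH : ContDiff ℝ 2 H)
    (hΦ : ContDiff ℝ 2 (fun p : ℝ × ((Fin n ⊕ Fin n) → ℝ) => Φ p.1 p.2))
    (hflow : ∀ (t : ℝ) (a : (Fin n ⊕ Fin n) → ℝ) (i : Fin n ⊕ Fin n),
      HasDerivAt (fun s => Φ s a i)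
        (∑ j : Fin n ⊕ Fin n, symplecticJ n i j *
          fderiv ℝ (fun w => H (t, w)) (Φ t a) (Pi.single j 1)) t)
    (t₀ : ℝ) (hinit : ∀ a, Φ t₀ a = a) :
    ∀ (t : ℝ) (a : (Fin n ⊕ Fin n) → ℝ),
      (spatialJacobian n Φ t a)ᵀ * symplecticJ n * spatialJacobian n Φ t a
        = symplecticJ n := by
  intro t a
  have hΦs : ∀ s, ContDiff ℝ 2 (Φ s) := fun s => hΦ.comp (contDiff_const.prodMk contDiff_id)
  have hHs : ∀ s, ContDiff ℝ 2 (fun w => H (s, w)) :=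
    fun s => hH.comp (contDiff_const.prodMk contDiff_id)
  have hJac : ∀ s, spatialJacobian n Φ s a = LinearMap.toMatrix' (fderiv ℝ (Φ s) a : _ →ₗ[ℝ] _) :=
    fun s => spatialJacobian_eq_toMatrix' ((hΦs s).differentiable two_ne_zero a)
  let A s := symplecticJ n * (hessian (fun w => H (s, w)) (Φ s a))ᵀ
  have hA : ∀ s, (A s)ᵀ * symplecticJ n + symplecticJ n * A s = 0 := fun s =>
    transpose_mul_symplecticJ_add_symplecticJ_mul_eq_zero
      (hessian_isSymm (hHs s).contDiffAt).transpose
  have hvariational : ∀ s i j, HasDerivAt (fun s => spatialJacobian n Φ s a i j)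
      ((A s * spatialJacobian n Φ s a) i j) s := by
    intro s i j
    simp only [hJac]
    exact hasDerivAt_toMatrix'_fderiv_of_hasDerivAt_flow hΦ (fun b => hasDerivAt_pi.2 (hflow s b))
      (hasFDerivAt_mulVec_partials _
        (((hHs s).fderiv_right le_rfl).differentiable one_ne_zero _)) i j
  have hJac₀ : spatialJacobian n Φ t₀ a = 1 := by
    rw [hJac, show Φ t₀ = id from funext hinit, fderiv_id]
    simp
  rw [transpose_mul_mul_self_eq_of_hasDerivAt hA hvariational t t₀, hJac₀]
  simp
end

section
/- Conservation of the eccentricity vector (Hermann): if x : I → ℝ³ is a C² curve with x(t) ≠ 0 for all t ∈ I satisfying x''(t) = −μ x(t)/‖x(t)‖³, then the eccentricity vector t ↦ (1/μ) x'(t) × (x(t) × x'(t)) − x(t)/‖x(t)‖ is constant on I. -/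
/-!
The force is central, so the angular momentum `L = x × v` is conserved. Hence
`(v × L)' = x'' × L = -(μ/‖x‖³) x × (x × v)`, which by the triple-product expansion
`x × (x × v) = ⟪x, v⟫ x - ‖x‖² v` is exactly `μ (x/‖x‖)'`. The eccentricity vector therefore
has zero derivative on `I`, and the mean value inequality makes it constant on the interval.
-/

/-- The cross product on Euclidean three-dimensional space `EuclideanSpace ℝ (Fin 3)`. -/
noncomputable def cross (a b : EuclideanSpace ℝ (Fin 3)) : EuclideanSpace ℝ (Fin 3) :=
  (EuclideanSpace.equiv (Fin 3) ℝ).symm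
    ![a 1 * b 2 - a 2 * b 1, a 2 * b 0 - a 0 * b 2, a 0 * b 1 - a 1 * b 0]

open scoped Matrix RealInnerProductSpace

lemma cross_eq_toLp_crossProduct (a b : EuclideanSpace ℝ (Fin 3)) :
    cross a b = WithLp.toLp 2 (a.ofLp ⨯₃ b.ofLp) := by
  ext i
  fin_cases i <;> rfl

lemma cross_self_eq_zero (a : EuclideanSpace ℝ (Fin 3)) : cross a a = 0 := by
  simp [cross_eq_toLp_crossProduct]

lemma cross_cross_eq_inner_smul_sub_inner_smul (u v w : EuclideanSpace ℝ (Fin 3)) :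
    cross u (cross v w) = ⟪u, w⟫ • v - ⟪u, v⟫ • w := by
  simp only [cross_eq_toLp_crossProduct, cross_cross_eq_smul_sub_smul',
    EuclideanSpace.inner_eq_star_dotProduct, star_trivial, dotProduct_comm]
  rfl

noncomputable def crossCLM :
    EuclideanSpace ℝ (Fin 3) →L[ℝ] EuclideanSpace ℝ (Fin 3) →L[ℝ] EuclideanSpace ℝ (Fin 3) :=
  LinearMap.toContinuousLinearMap
    (LinearMap.toContinuousLinearMap.toLinearMap ∘ₗ
      ((crossProduct.compr₂ (WithLp.linearEquiv 2 ℝ (Fin 3 → ℝ)).symm.toLinearMap).compl₁₂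
        (WithLp.linearEquiv 2 ℝ _).toLinearMap (WithLp.linearEquiv 2 ℝ _).toLinearMap))

lemma crossCLM_apply (a b : EuclideanSpace ℝ (Fin 3)) : crossCLM a b = cross a b := by
  rw [cross_eq_toLp_crossProduct]; rfl

lemma HasDerivWithinAt.cross {f g : ℝ → EuclideanSpace ℝ (Fin 3)}
    {f' g' : EuclideanSpace ℝ (Fin 3)} {s : Set ℝ} {t : ℝ}
    (hf : HasDerivWithinAt f f' s t) (hg : HasDerivWithinAt g g' s t) :
    HasDerivWithinAt (fun u => cross (f u) (g u)) (cross (f t) g' + cross f' (g t)) s t := by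
  simpa only [crossCLM_apply] using crossCLM.hasDerivWithinAt_of_bilinear hf hg

section InnerProductSpace

variable {F : Type*} [NormedAddCommGroup F] [InnerProductSpace ℝ F] {f : ℝ → F} {f' : F}
  {s : Set ℝ} {t : ℝ}

lemma HasDerivWithinAt.norm (hf : HasDerivWithinAt f f' s t) (h0 : f t ≠ 0) :
    HasDerivWithinAt (‖f ·‖) (⟪f t, f'⟫ / ‖f t‖) s t := by
  have hsq : ‖f t‖ ^ 2 ≠ 0 := by positivity
  convert hf.norm_sq.sqrt hsq using 1
  · simp only [Real.sqrt_sq (norm_nonneg _)]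
  · rw [Real.sqrt_sq (norm_nonneg _)]
    field_simp

lemma HasDerivWithinAt.inv_norm_smul (hf : HasDerivWithinAt f f' s t) (h0 : f t ≠ 0) :
    HasDerivWithinAt (fun u => ‖f u‖⁻¹ • f u)
      (‖f t‖⁻¹ • f' - (⟪f t, f'⟫ / ‖f t‖ ^ 3) • f t) s t := by
  have hr : ‖f t‖ ≠ 0 := norm_ne_zero_iff.mpr h0
  refine (((hf.norm h0).inv hr).smul hf).congr_deriv ?_
  rw [Pi.inv_apply]
  match_scalars <;> field_simp

end InnerProductSpace

lemma Convex.eq_of_forall_hasDerivWithinAt_zero {F : Type*} [NormedAddCommGroup F]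
    [NormedSpace ℝ F] {f : ℝ → F} {s : Set ℝ} (hs : Convex ℝ s)
    (hf : ∀ t ∈ s, HasDerivWithinAt f 0 s t) {a b : ℝ} (ha : a ∈ s) (hb : b ∈ s) :
    f a = f b := by
  have h := hs.norm_image_sub_le_of_norm_hasDerivWithin_le hf (C := 0) (by simp) hb ha
  rw [zero_mul, norm_le_zero_iff, sub_eq_zero] at h
  exact h

lemma hasDerivWithinAt_cross_zero_of_central {x v : ℝ → EuclideanSpace ℝ (Fin 3)} {k : ℝ}
    {s : Set ℝ} {t : ℝ} (hx : HasDerivWithinAt x (v t) s t)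
    (hv : HasDerivWithinAt v (k • x t) s t) :
    HasDerivWithinAt (fun u => cross (x u) (v u)) 0 s t := by
  refine (hx.cross hv).congr_deriv ?_
  rw [← crossCLM_apply (x t), map_smul, crossCLM_apply, cross_self_eq_zero, cross_self_eq_zero,
    smul_zero, add_zero]

noncomputable def eccentricityVector (μ : ℝ) (x v : EuclideanSpace ℝ (Fin 3)) :
    EuclideanSpace ℝ (Fin 3) :=
  (1 / μ) • cross v (cross x v) - ‖x‖⁻¹ • x

lemma hasDerivWithinAt_eccentricityVector {μ : ℝ} (hμ : μ ≠ 0)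
    {x v : ℝ → EuclideanSpace ℝ (Fin 3)} {s : Set ℝ} {t : ℝ} (hx0 : x t ≠ 0)
    (hx : HasDerivWithinAt x (v t) s t)
    (hv : HasDerivWithinAt v (-(μ / ‖x t‖ ^ 3) • x t) s t) :
    HasDerivWithinAt (fun u => eccentricityVector μ (x u) (v u)) 0 s t := by
  have hr : ‖x t‖ ≠ 0 := norm_ne_zero_iff.mpr hx0
  refine (((hv.cross (hasDerivWithinAt_cross_zero_of_central hx hv)).const_smul (1 / μ)).sub
    (hx.inv_norm_smul hx0)).congr_deriv ?_
  rw [← crossCLM_apply (v t) 0, map_zero, zero_add, cross_cross_eq_inner_smul_sub_inner_smul,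
    real_inner_smul_left, real_inner_smul_left, real_inner_self_eq_norm_sq]
  match_scalars <;> field_simp <;> ring

/-- **Conservation of the eccentricity vector (Hermann).** If `x : I → ℝ³` is a
`C²` curve (with velocity `v = x'`) which avoids the origin and satisfies
`x''(t) = −μ x(t)/‖x(t)‖³` for the Kepler problem (`μ > 0`, attractive center at
the origin), then the eccentricity vector
`t ↦ (1/μ) x'(t) × (x(t) × x'(t)) − x(t)/‖x(t)‖` is constant on the interval `I`. -/
theorem eccentricity_vector_constant
    (μ : ℝ) (hμ : 0 < μ) (I : Set ℝ) (hI : I.OrdConnected)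
    (x v : ℝ → EuclideanSpace ℝ (Fin 3))
    (hx0 : ∀ t ∈ I, x t ≠ 0)
    (hx : ∀ t ∈ I, HasDerivWithinAt x (v t) I t)
    (hv : ∀ t ∈ I, HasDerivWithinAt v (-(μ / ‖x t‖ ^ 3) • x t) I t) :
    ∀ t₁ ∈ I, ∀ t₂ ∈ I,
      (1 / μ) • cross (v t₁) (cross (x t₁) (v t₁)) - (‖x t₁‖)⁻¹ • x t₁ =
      (1 / μ) • cross (v t₂) (cross (x t₂) (v t₂)) - (‖x t₂‖)⁻¹ • x t₂ := by
  intro t₁ h₁ t₂ h₂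
  exact hI.convex.eq_of_forall_hasDerivWithinAt_zero
    (f := fun t => eccentricityVector μ (x t) (v t))
    (fun t ht => hasDerivWithinAt_eccentricityVector hμ.ne' (hx0 t ht) (hx t ht) (hv t ht)) h₁ h₂
end
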